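/- Let w ∈ A₂ on ℝ. The operator Σ_{I∈D} ⟨w^{1/2}⟩_I ⟨w^{-1/2}⟩_{I₋} h_{I₋} ⊗ h_I (which equals P^{(0,0)}_{⟨w^{1/2}⟩} S P^{(0,0)}_{⟨w^{-1/2}⟩} for the Haar shift S h_I = h_{I₋}) has L² → L² operator norm equal to sup_{I∈D} ⟨w^{1/2}⟩_I ⟨w^{-1/2}⟩_{I₋}, and this is at most a constant times [w]_{A₂}^{1/2}. -/

import Mathlib

open MeasureTheory Set
open scoped ENNReal

noncomputable section

/-- The dyadic interval `[k·2^n, (k+1)·2^n)` encoded by the pair `p = (n, k)`. -/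
def dyad (p : ℤ × ℤ) : Set ℝ := Set.Ico ((p.2 : ℝ) * 2 ^ p.1) (((p.2 : ℝ) + 1) * 2 ^ p.1)

/-- Left half of a dyadic interval. -/
def dLeft (p : ℤ × ℤ) : ℤ × ℤ := (p.1 - 1, 2 * p.2)

/-- Right half of a dyadic interval. -/
def dRight (p : ℤ × ℤ) : ℤ × ℤ := (p.1 - 1, 2 * p.2 + 1)

/-- Dyadic parent. -/
def dParent (p : ℤ × ℤ) : ℤ × ℤ := (p.1 + 1, Int.fdiv p.2 2)

/-- Length of the dyadic interval. -/
def dLen (p : ℤ × ℤ) : ℝ := 2 ^ p.1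

/-- The L²-normalized Haar function `h_I = |I|^{-1/2}(1_{I₋} - 1_{I₊})`. -/
def haarF (p : ℤ × ℤ) : ℝ → ℝ := fun x =>
  (Real.sqrt (dLen p))⁻¹ *
    ((dyad (dLeft p)).indicator (fun _ => (1 : ℝ)) x -
      (dyad (dRight p)).indicator (fun _ => (1 : ℝ)) x)

/-- The averaging function `h_I^1 = |I|^{-1} 1_I`. -/
def haarAvg (p : ℤ × ℤ) : ℝ → ℝ := fun x =>
  (dLen p)⁻¹ * (dyad p).indicator (fun _ => (1 : ℝ)) x

/-- Haar coefficient `⟨f, h_I⟩`. -/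
def hc (f : ℝ → ℝ) (p : ℤ × ℤ) : ℝ := ∫ x, f x * haarF p x

/-- Average `⟨f⟩_I = |I|⁻¹ ∫_I f`. -/
def avg (f : ℝ → ℝ) (p : ℤ × ℤ) : ℝ := (dLen p)⁻¹ * ∫ x in dyad p, f x

open Classical in
/-- `δ(J, I) = 1` if `J ⊆ I₋` and `-1` otherwise (in particular if `J ⊆ I₊`). -/
def dsgn (q p : ℤ × ℤ) : ℝ := if dyad q ⊆ dyad (dLeft p) then 1 else -1

/-- `𝔰(J) = √2 · Σ_{K : K₋ ⊋ J} |K|⁻¹`. -/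
def sfrak (p : ℤ × ℤ) : ℝ :=
  Real.sqrt 2 * ∑' q : {q : ℤ × ℤ // dyad p ⊂ dyad (dLeft q)}, (dLen q.1)⁻¹

/-!
The Haar functions `h_I` form an orthonormal system in `L²(ℝ)`, and the operator sends `h_I`
to `a_I h_{I₋}` with `a_I = ⟨w^{1/2}⟩_I ⟨w^{-1/2}⟩_{I₋}`. As `I ↦ I₋` is injective, Bessel's
inequality bounds every finite partial sum of `Σ_I a_I ⟨f, h_I⟩ h_{I₋}` by `(sup_I a_I) ‖f‖₂`,
and Fatou's lemma carries the bound over to the pointwise series; testing on `f = h_I` shows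
that `sup_I a_I` is optimal. Finally Jensen's inequality gives `⟨w^{1/2}⟩_I ≤ ⟨w⟩_I^{1/2}` and
`⟨w^{-1/2}⟩_{I₋} ≤ 2⟨w^{-1/2}⟩_I ≤ 2⟨w^{-1}⟩_I^{1/2}`, so `a_I ≤ 2 [w]_{A₂}^{1/2}`.
-/

open Filter

section Lp

variable {α E : Type*} [MeasurableSpace α] {μ : Measure α} [NormedAddCommGroup E] {p : ℝ≥0∞}

theorem eLpNorm_le_of_le_liminf {ι : Type*} {u : Filter ι} [u.IsCountablyGenerated] [u.NeBot]
    {f : α → E} {g : ι → α → E} (hp : p ≠ ∞) (hg : ∀ i, AEStronglyMeasurable (g i) μ)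
    (hfg : ∀ᵐ x ∂μ, ‖f x‖ₑ ≤ liminf (fun i => ‖g i x‖ₑ) u) {B : ℝ≥0∞}
    (hB : ∀ i, eLpNorm (g i) p μ ≤ B) : eLpNorm f p μ ≤ B := by
  rcases eq_or_ne p 0 with rfl | hp0
  · simp
  have hr : 0 < p.toReal := ENNReal.toReal_pos hp0 hp
  have hiff : ∀ (h : α → E) (C : ℝ≥0∞),
      eLpNorm h p μ ≤ C ↔ ∫⁻ x, ‖h x‖ₑ ^ p.toReal ∂μ ≤ C ^ p.toReal := fun h C => by
    rw [eLpNorm_eq_lintegral_rpow_enorm_toReal hp0 hp, one_div,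
      ← ENNReal.le_rpow_inv_iff (inv_pos.2 hr), inv_inv]
  rw [hiff]
  calc ∫⁻ x, ‖f x‖ₑ ^ p.toReal ∂μ
      ≤ ∫⁻ x, liminf (fun i => ‖g i x‖ₑ ^ p.toReal) u ∂μ := by
        refine lintegral_mono_ae (hfg.mono fun x hx => ?_)
        calc ‖f x‖ₑ ^ p.toReal ≤ (liminf (fun i => ‖g i x‖ₑ) u) ^ p.toReal := by gcongr
          _ = liminf (fun i => ‖g i x‖ₑ ^ p.toReal) u :=
            (ENNReal.monotone_rpow_of_nonneg hr.le).map_liminf_of_continuousAt _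
              ENNReal.continuous_rpow_const.continuousAt
    _ ≤ liminf (fun i => ∫⁻ x, ‖g i x‖ₑ ^ p.toReal ∂μ) u :=
        lintegral_liminf_le' fun i => (hg i).enorm.pow_const _
    _ ≤ B ^ p.toReal := by
        refine liminf_le_of_le (by isBoundedDefault) fun b hb => ?_
        obtain ⟨i, hi⟩ := hb.exists
        exact hi.trans ((hiff _ _).1 (hB i))

theorem eLpNorm_tsum_le {ι : Type*} [Countable ι] {F : ι → α → E}
    (hp : p ≠ ∞) (hF : ∀ i, AEStronglyMeasurable (F i) μ) {B : ℝ≥0∞}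
    (hB : ∀ s : Finset ι, eLpNorm (∑ i ∈ s, F i) p μ ≤ B) :
    eLpNorm (fun x => ∑' i, F i x) p μ ≤ B := by
  refine eLpNorm_le_of_le_liminf (u := atTop) hp
    (fun s => Finset.aestronglyMeasurable_sum s fun i _ => hF i) (ae_of_all _ fun x => ?_) hB
  by_cases hx : Summable fun i => F i x
  · refine (Tendsto.liminf_eq ?_).ge
    simp only [Finset.sum_apply]
    exact (continuous_enorm.tendsto _).comp hx.hasSum
  · simp [tsum_eq_zero_of_not_summable hx]

lemma MeasureTheory.MemLp.inner_toLp {f g : α → ℝ} (hf : MemLp f 2 μ) (hg : MemLp g 2 μ) :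
    inner ℝ (hf.toLp f) (hg.toLp g) = ∫ x, f x * g x ∂μ := by
  rw [L2.inner_def]
  refine integral_congr_ae ?_
  filter_upwards [hf.coeFn_toLp, hg.coeFn_toLp] with x hfx hgx
  rw [hfx, hgx, Real.inner_apply]

lemma MeasureTheory.Lp.eLpNorm_eq_ofReal_norm (u : Lp E p μ) {g : α → E} (h : u =ᵐ[μ] g) :
    eLpNorm g p μ = ENNReal.ofReal ‖u‖ := by
  rw [Lp.norm_def, ENNReal.ofReal_toReal (Lp.eLpNorm_ne_top u), eLpNorm_congr_ae h]

lemma MeasureTheory.MemLp.coeFn_sum_smul_toLp {ι : Type*} [NormedSpace ℝ E] [Fact (1 ≤ p)]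
    (s : Finset ι) (c : ι → ℝ) {g : ι → α → E} (hg : ∀ i, MemLp (g i) p μ) :
    ⇑(∑ i ∈ s, c i • (hg i).toLp (g i)) =ᵐ[μ] ∑ i ∈ s, c i • g i := by
  classical
  induction s using Finset.induction_on with
  | empty => simpa using Lp.coeFn_zero E p μ
  | insert i s hi ih =>
    rw [Finset.sum_insert hi, Finset.sum_insert hi]
    filter_upwards [Lp.coeFn_add (c i • (hg i).toLp (g i)) (∑ j ∈ s, c j • (hg j).toLp (g j)),
      Lp.coeFn_smul (c i) ((hg i).toLp (g i)), (hg i).coeFn_toLp, ih] with x h₁ h₂ h₃ h₄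
    rw [h₁, Pi.add_apply, h₂, h₄, Pi.add_apply, Pi.smul_apply, Pi.smul_apply, h₃]

lemma MeasureTheory.IntegrableOn.sqrt {s : Set α} {w : α → ℝ} (hw : IntegrableOn w s μ)
    (hs : μ s ≠ ∞) (hw₀ : ∀ᵐ x ∂μ.restrict s, 0 ≤ w x) :
    IntegrableOn (fun x => √(w x)) s μ := by
  have : IsFiniteMeasure (μ.restrict s) := ⟨by simpa using hs.lt_top⟩
  refine MemLp.integrable one_le_two ?_
  rw [memLp_two_iff_integrable_sq
    (Real.continuous_sqrt.comp_aestronglyMeasurable hw.aestronglyMeasurable)]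
  exact hw.congr (hw₀.mono fun x hx => (Real.sq_sqrt hx).symm)

end Lp

theorem Orthonormal.norm_sum_smul_inner_le {𝕜 E ι : Type*} [RCLike 𝕜] [NormedAddCommGroup E]
    [InnerProductSpace 𝕜 E] {v : ι → E} (hv : Orthonormal 𝕜 v) {σ : ι → ι}
    (hσ : σ.Injective) {a : ι → 𝕜} {M : ℝ} (hM : 0 ≤ M) (ha : ∀ i, ‖a i‖ ≤ M)
    (s : Finset ι) (x : E) :
    ‖∑ i ∈ s, (a i * inner 𝕜 (v i) x) • v (σ i)‖ ≤ M * ‖x‖ := by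
  have hvσ : Orthonormal 𝕜 (v ∘ σ) := hv.comp σ hσ
  have hsq : ‖∑ i ∈ s, (a i * inner 𝕜 (v i) x) • v (σ i)‖ ^ 2
      = ∑ i ∈ s, ‖a i‖ ^ 2 * ‖inner 𝕜 (v i) x‖ ^ 2 := by
    rw [@norm_sq_eq_re_inner 𝕜]
    have := hvσ.inner_sum (fun i => a i * inner 𝕜 (v i) x) (fun i => a i * inner 𝕜 (v i) x) s
    simp only [Function.comp_apply] at this
    rw [this, map_sum]
    refine Finset.sum_congr rfl fun i _ => ?_
    rw [RCLike.conj_mul, ← mul_pow, ← norm_mul]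
    norm_cast
  refine pow_le_pow_iff_left₀ (norm_nonneg _) (by positivity) two_ne_zero |>.1 ?_
  calc ‖∑ i ∈ s, (a i * inner 𝕜 (v i) x) • v (σ i)‖ ^ 2
      = ∑ i ∈ s, ‖a i‖ ^ 2 * ‖inner 𝕜 (v i) x‖ ^ 2 := hsq
    _ ≤ ∑ i ∈ s, M ^ 2 * ‖inner 𝕜 (v i) x‖ ^ 2 := by
        gcongr with i; exact ha i
    _ = M ^ 2 * ∑ i ∈ s, ‖inner 𝕜 (v i) x‖ ^ 2 := by rw [Finset.mul_sum]
    _ ≤ M ^ 2 * ‖x‖ ^ 2 := by gcongr; exact hv.sum_inner_products_le x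
    _ = (M * ‖x‖) ^ 2 := by ring

lemma dLen_pos (p : ℤ × ℤ) : 0 < dLen p := zpow_pos two_pos _

lemma dLen_dLeft (p : ℤ × ℤ) : dLen (dLeft p) = dLen p / 2 := by
  rw [dLen, dLen, dLeft, zpow_sub_one₀ two_ne_zero, div_eq_mul_inv]

lemma dLeft_injective : Function.Injective dLeft := by
  intro p q h
  simp only [dLeft, Prod.ext_iff] at h
  exact Prod.ext (by omega) (by omega)

lemma volume_dyad (p : ℤ × ℤ) : volume (dyad p) = ENNReal.ofReal (dLen p) := by
  rw [dyad, Real.volume_Ico, dLen]; ring_nf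

lemma mem_dyad_iff {x : ℝ} {p : ℤ × ℤ} : x ∈ dyad p ↔ ⌊x / 2 ^ p.1⌋ = p.2 := by
  have h := dLen_pos p
  rw [dLen] at h
  rw [dyad, mem_Ico, Int.floor_eq_iff, le_div_iff₀ h, div_lt_iff₀ h]

lemma floor_div_two_zpow_of_le {m n : ℤ} (h : m ≤ n) (x : ℝ) :
    ⌊x / 2 ^ n⌋ = ⌊x / 2 ^ m⌋ / 2 ^ (n - m).toNat := by
  have hn : (2 : ℝ) ^ n = 2 ^ m * ((2 ^ (n - m).toNat : ℤ) : ℝ) := by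
    rw [Int.cast_pow, Int.cast_ofNat, ← zpow_natCast, Int.toNat_of_nonneg (by omega),
      ← zpow_add₀ two_ne_zero, add_sub_cancel]
  rw [← Int.floor_div_cast_of_nonneg (by positivity), hn, div_div]

lemma dyad_subset_or_disjoint {q p : ℤ × ℤ} (h : q.1 ≤ p.1) :
    dyad q ⊆ dyad p ∨ Disjoint (dyad q) (dyad p) := by
  by_cases hk : q.2 / 2 ^ (p.1 - q.1).toNat = p.2
  · left
    intro x hx
    rw [mem_dyad_iff] at hx ⊢
    rw [floor_div_two_zpow_of_le h, hx, hk]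
  · right
    refine Set.disjoint_left.2 fun x hxq hxp => hk ?_
    rw [mem_dyad_iff] at hxq hxp
    rw [← hxq, ← floor_div_two_zpow_of_le h, hxp]

lemma disjoint_dyad_of_fst_eq {q p : ℤ × ℤ} (h₁ : q.1 = p.1) (h₂ : q ≠ p) :
    Disjoint (dyad q) (dyad p) := by
  refine Set.disjoint_left.2 fun x hxq hxp => h₂ (Prod.ext h₁ ?_)
  rw [mem_dyad_iff] at hxq hxp
  rw [← hxq, ← hxp, h₁]

lemma mem_dyad_iff_mem_dLeft_or_mem_dRight {x : ℝ} {p : ℤ × ℤ} :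
    x ∈ dyad p ↔ x ∈ dyad (dLeft p) ∨ x ∈ dyad (dRight p) := by
  simp only [mem_dyad_iff, dLeft, dRight]
  rw [floor_div_two_zpow_of_le (sub_le_self p.1 zero_le_one), sub_sub_cancel, Int.toNat_one,
    pow_one]
  omega

lemma disjoint_dyad_dLeft_dRight (p : ℤ × ℤ) : Disjoint (dyad (dLeft p)) (dyad (dRight p)) :=
  disjoint_dyad_of_fst_eq rfl (by simp [dLeft, dRight])

lemma measureReal_dyad (p : ℤ × ℤ) : volume.real (dyad p) = dLen p := by
  rw [measureReal_def, volume_dyad, ENNReal.toReal_ofReal (dLen_pos p).le]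

lemma integrable_indicator_dyad (p : ℤ × ℤ) :
    Integrable ((dyad p).indicator fun _ => (1 : ℝ)) :=
  (integrable_indicator_iff measurableSet_Ico).2 (integrableOn_const (by simp))

lemma integral_indicator_dyad (p : ℤ × ℤ) :
    ∫ x, (dyad p).indicator (fun _ => (1 : ℝ)) x = dLen p := by
  rw [← measureReal_dyad]; exact integral_indicator_one measurableSet_Ico

lemma memLp_haarF (p : ℤ × ℤ) : MemLp (haarF p) 2 volume := by
  have h : ∀ q, MemLp ((dyad q).indicator fun _ => (1 : ℝ)) 2 volume := fun q =>
    memLp_indicator_const 2 measurableSet_Ico 1 (Or.inr (by simp))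
  exact ((h (dLeft p)).sub (h (dRight p))).const_mul _

lemma haarF_of_notMem {p : ℤ × ℤ} {x : ℝ} (hx : x ∉ dyad p) : haarF p x = 0 := by
  rw [mem_dyad_iff_mem_dLeft_or_mem_dRight, not_or] at hx
  simp [haarF, indicator_of_notMem hx.1, indicator_of_notMem hx.2]

lemma haarF_of_mem_dLeft {p : ℤ × ℤ} {x : ℝ} (hx : x ∈ dyad (dLeft p)) :
    haarF p x = (√(dLen p))⁻¹ := by
  have hx' := Set.disjoint_left.1 (disjoint_dyad_dLeft_dRight p) hx
  simp [haarF, indicator_of_mem hx, indicator_of_notMem hx']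

lemma haarF_of_mem_dRight {p : ℤ × ℤ} {x : ℝ} (hx : x ∈ dyad (dRight p)) :
    haarF p x = -(√(dLen p))⁻¹ := by
  have hx' := Set.disjoint_right.1 (disjoint_dyad_dLeft_dRight p) hx
  simp [haarF, indicator_of_mem hx, indicator_of_notMem hx']

lemma haarF_mul_self (p : ℤ × ℤ) (x : ℝ) :
    haarF p x * haarF p x = (dLen p)⁻¹ * (dyad p).indicator (fun _ => (1 : ℝ)) x := by
  have hsq : (√(dLen p))⁻¹ * (√(dLen p))⁻¹ = (dLen p)⁻¹ := by
    rw [← mul_inv, Real.mul_self_sqrt (dLen_pos p).le]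
  by_cases hx : x ∈ dyad p
  · rw [indicator_of_mem hx, mul_one]
    rcases mem_dyad_iff_mem_dLeft_or_mem_dRight.1 hx with hL | hR
    · rw [haarF_of_mem_dLeft hL, hsq]
    · rw [haarF_of_mem_dRight hR, neg_mul_neg, hsq]
  · rw [indicator_of_notMem hx, haarF_of_notMem hx, mul_zero, mul_zero]

lemma integral_haarF (p : ℤ × ℤ) : ∫ x, haarF p x = 0 := by
  unfold haarF
  rw [integral_const_mul, integral_sub (integrable_indicator_dyad _)
    (integrable_indicator_dyad _), integral_indicator_dyad, integral_indicator_dyad]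
  exact mul_eq_zero_of_right _ (sub_eq_zero.2 rfl)

/-- A dyadic interval `J ≠ I` no longer than `I` lies in `I₋`, in `I₊`, or outside `I`. -/
lemma exists_eqOn_haarF {q p : ℤ × ℤ} (hle : q.1 ≤ p.1) (hne : q ≠ p) :
    ∃ c, EqOn (haarF p) (fun _ => c) (dyad q) := by
  rcases hle.lt_or_eq with hlt | heq
  · have hq : q.1 ≤ (dLeft p).1 := by simp only [dLeft]; omega
    rcases dyad_subset_or_disjoint hq with hL | hL
    · exact ⟨_, fun x hx => haarF_of_mem_dLeft (hL hx)⟩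
    rcases dyad_subset_or_disjoint (p := dRight p) hq with hR | hR
    · exact ⟨_, fun x hx => haarF_of_mem_dRight (hR hx)⟩
    refine ⟨0, fun x hx => haarF_of_notMem ?_⟩
    rw [mem_dyad_iff_mem_dLeft_or_mem_dRight, not_or]
    exact ⟨Set.disjoint_left.1 hL hx, Set.disjoint_left.1 hR hx⟩
  · exact ⟨0, fun x hx =>
      haarF_of_notMem (Set.disjoint_left.1 (disjoint_dyad_of_fst_eq heq hne) hx)⟩

lemma integral_haarF_mul_haarF_of_ne {q p : ℤ × ℤ} (hne : q ≠ p) :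
    ∫ x, haarF q x * haarF p x = 0 := by
  wlog hle : q.1 ≤ p.1 generalizing q p
  · simp_rw [mul_comm (haarF q _)]
    exact this hne.symm (le_of_not_ge hle)
  obtain ⟨c, hc⟩ := exists_eqOn_haarF hle hne
  have hmul : (fun x => haarF q x * haarF p x) = fun x => haarF q x * c := by
    ext x
    by_cases hx : x ∈ dyad q
    · rw [hc hx]
    · rw [haarF_of_notMem hx, zero_mul, zero_mul]
  rw [hmul, integral_mul_const, integral_haarF, zero_mul]

lemma integral_haarF_mul_self (p : ℤ × ℤ) : ∫ x, haarF p x * haarF p x = 1 := by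
  simp_rw [haarF_mul_self]
  rw [integral_const_mul, integral_indicator_dyad, inv_mul_cancel₀ (dLen_pos p).ne']

def haarLp (p : ℤ × ℤ) : Lp ℝ 2 (volume : Measure ℝ) := (memLp_haarF p).toLp (haarF p)

lemma orthonormal_haarLp : Orthonormal ℝ haarLp := by
  rw [orthonormal_iff_ite]
  intro q p
  rw [haarLp, haarLp, MemLp.inner_toLp]
  split_ifs with h
  · rw [h, integral_haarF_mul_self]
  · exact integral_haarF_mul_haarF_of_ne h

lemma hc_eq_inner {f : ℝ → ℝ} (hf : MemLp f 2 volume) (p : ℤ × ℤ) :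
    hc f p = inner ℝ (haarLp p) (hf.toLp f) := by
  rw [real_inner_comm, haarLp, MemLp.inner_toLp, hc]

lemma hc_haarF (q p : ℤ × ℤ) : hc (haarF q) p = if p = q then 1 else 0 := by
  rw [hc_eq_inner (memLp_haarF q), ← haarLp, orthonormal_iff_ite.1 orthonormal_haarLp]

lemma eLpNorm_haarF (p : ℤ × ℤ) : eLpNorm (haarF p) 2 volume = 1 := by
  rw [Lp.eLpNorm_eq_ofReal_norm (haarLp p) (memLp_haarF p).coeFn_toLp, orthonormal_haarLp.1 p,
    ENNReal.ofReal_one]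

/-- `Σ_I a_I ⟨f, h_I⟩ h_{σ I}`, summed pointwise: `tsum` is `0` wherever the series is not
summable, which is why its `L²` bound has to go through Fatou's lemma. -/
def haarShift (σ : ℤ × ℤ → ℤ × ℤ) (a : ℤ × ℤ → ℝ) (f : ℝ → ℝ) : ℝ → ℝ :=
  fun x => ∑' p, a p * hc f p * haarF (σ p) x

theorem eLpNorm_haarShift_le {σ : ℤ × ℤ → ℤ × ℤ} (hσ : σ.Injective) {a : ℤ × ℤ → ℝ} {M : ℝ}
    (hM : 0 ≤ M) (ha : ∀ p, |a p| ≤ M) {f : ℝ → ℝ} (hf : MemLp f 2 volume) :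
    eLpNorm (haarShift σ a f) 2 volume ≤ ENNReal.ofReal M * eLpNorm f 2 volume := by
  refine eLpNorm_tsum_le (by norm_num)
    (fun p => ((memLp_haarF (σ p)).const_mul _).aestronglyMeasurable) fun s => ?_
  have hsum : ∑ p ∈ s, (fun x => a p * hc f p * haarF (σ p) x)
      = ∑ p ∈ s, (a p * hc f p) • haarF (σ p) := rfl
  rw [hsum,
    Lp.eLpNorm_eq_ofReal_norm _ (MemLp.coeFn_sum_smul_toLp s _ fun p => memLp_haarF (σ p)),
    Lp.eLpNorm_eq_ofReal_norm _ hf.coeFn_toLp, ← ENNReal.ofReal_mul hM]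
  refine ENNReal.ofReal_le_ofReal ?_
  simp_rw [hc_eq_inner hf]
  exact orthonormal_haarLp.norm_sum_smul_inner_le hσ hM ha s _

lemma haarShift_haarF (σ : ℤ × ℤ → ℤ × ℤ) (a : ℤ × ℤ → ℝ) (q : ℤ × ℤ) :
    haarShift σ a (haarF q) = a q • haarF (σ q) := by
  ext x
  rw [haarShift, tsum_eq_single q fun p hp => by simp [hc_haarF, hp]]
  simp [hc_haarF]

theorem isLeast_haarShift_bound {σ : ℤ × ℤ → ℤ × ℤ} (hσ : σ.Injective) {a : ℤ × ℤ → ℝ}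
    (ha₀ : ∀ p, 0 ≤ a p) (hbdd : BddAbove (range a)) :
    IsLeast {C : ℝ | 0 ≤ C ∧ ∀ f : ℝ → ℝ, MemLp f 2 volume →
      eLpNorm (haarShift σ a f) 2 volume ≤ ENNReal.ofReal C * eLpNorm f 2 volume} (⨆ p, a p) := by
  have haM : ∀ p, a p ≤ ⨆ p, a p := le_ciSup hbdd
  have hM₀ : 0 ≤ ⨆ p, a p := (ha₀ 0).trans (haM 0)
  refine ⟨⟨hM₀, fun f hf => eLpNorm_haarShift_le hσ hM₀
    (fun p => (abs_of_nonneg (ha₀ p)).trans_le (haM p)) hf⟩, ?_⟩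
  rintro C ⟨hC₀, hC⟩
  refine ciSup_le fun q => ?_
  have hq := hC _ (memLp_haarF q)
  rwa [haarShift_haarF, eLpNorm_const_smul, eLpNorm_haarF, eLpNorm_haarF, mul_one, mul_one,
    Real.enorm_eq_ofReal (ha₀ q), ENNReal.ofReal_le_ofReal_iff hC₀] at hq

lemma MeasureTheory.LocallyIntegrable.integrableOn_dyad {g : ℝ → ℝ}
    (hg : LocallyIntegrable g volume) (p : ℤ × ℤ) : IntegrableOn g (dyad p) volume :=
  (hg.integrableOn_isCompact isCompact_Icc).mono_set Ico_subset_Icc_self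

lemma avg_eq_setAverage (g : ℝ → ℝ) (p : ℤ × ℤ) : avg g p = ⨍ x in dyad p, g x := by
  rw [setAverage_eq, measureReal_dyad, smul_eq_mul, avg]

lemma avg_nonneg {g : ℝ → ℝ} (hg₀ : ∀ x, 0 ≤ g x) (p : ℤ × ℤ) : 0 ≤ avg g p :=
  mul_nonneg (inv_nonneg.2 (dLen_pos p).le) (setIntegral_nonneg measurableSet_Ico fun x _ => hg₀ x)

lemma avg_dLeft_le_two_mul {g : ℝ → ℝ} {p : ℤ × ℤ} (hg₀ : ∀ x, 0 ≤ g x)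
    (hg : IntegrableOn g (dyad p) volume) : avg g (dLeft p) ≤ 2 * avg g p := by
  have hsub : dyad (dLeft p) ⊆ dyad p := fun x hx =>
    mem_dyad_iff_mem_dLeft_or_mem_dRight.2 (Or.inl hx)
  have hmono : ∫ x in dyad (dLeft p), g x ≤ ∫ x in dyad p, g x :=
    setIntegral_mono_set hg (ae_of_all _ hg₀) hsub.eventuallyLE
  calc avg g (dLeft p) = 2 * ((dLen p)⁻¹ * ∫ x in dyad (dLeft p), g x) := by
        rw [avg, dLen_dLeft, inv_div]; ring
    _ ≤ 2 * avg g p := by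
        rw [avg]
        gcongr
        exact (inv_pos.2 (dLen_pos p)).le

lemma avg_sqrt_le_sqrt_avg {w : ℝ → ℝ} {p : ℤ × ℤ} (hw₀ : ∀ x, 0 ≤ w x)
    (hw : IntegrableOn w (dyad p) volume) : avg (fun x => √(w x)) p ≤ √(avg w p) := by
  have hvol : volume (dyad p) ≠ ∞ := by simp [volume_dyad]
  rw [avg_eq_setAverage, avg_eq_setAverage]
  exact Real.strictConcaveOn_sqrt.concaveOn.le_map_set_average Real.continuous_sqrt.continuousOn
    isClosed_Ici (by simp [volume_dyad, dLen_pos]) hvol (ae_of_all _ hw₀) hw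
    (hw.sqrt hvol (ae_of_all _ hw₀))

theorem avg_sqrt_mul_avg_inv_sqrt_dLeft_le {w : ℝ → ℝ} {p : ℤ × ℤ} (hw₀ : ∀ x, 0 ≤ w x)
    (hw : IntegrableOn w (dyad p) volume) (hw' : IntegrableOn (fun x => (w x)⁻¹) (dyad p) volume) :
    avg (fun x => √(w x)) p * avg (fun x => (√(w x))⁻¹) (dLeft p)
      ≤ 2 * √(avg w p * avg (fun x => (w x)⁻¹) p) := by
  have hw₀' : ∀ x, 0 ≤ (w x)⁻¹ := fun x => inv_nonneg.2 (hw₀ x)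
  have hvol : volume (dyad p) ≠ ∞ := by simp [volume_dyad]
  have hleft : avg (fun x => √(w x)⁻¹) (dLeft p) ≤ 2 * √(avg (fun x => (w x)⁻¹) p) :=
    (avg_dLeft_le_two_mul (fun x => Real.sqrt_nonneg _) (hw'.sqrt hvol (ae_of_all _ hw₀'))).trans
      (by gcongr; exact avg_sqrt_le_sqrt_avg hw₀' hw')
  simp_rw [← Real.sqrt_inv]
  calc avg (fun x => √(w x)) p * avg (fun x => √(w x)⁻¹) (dLeft p)
      ≤ √(avg w p) * (2 * √(avg (fun x => (w x)⁻¹) p)) :=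
        mul_le_mul (avg_sqrt_le_sqrt_avg hw₀ hw) hleft (avg_nonneg (fun x => Real.sqrt_nonneg _) _)
          (Real.sqrt_nonneg _)
    _ = 2 * √(avg w p * avg (fun x => (w x)⁻¹) p) := by
        rw [Real.sqrt_mul (avg_nonneg hw₀ p)]; ring

/-- The operator `Σ_I ⟨w^{1/2}⟩_I ⟨w^{-1/2}⟩_{I₋} h_{I₋} ⊗ h_I` has L²
operator norm exactly `sup_I ⟨w^{1/2}⟩_I ⟨w^{-1/2}⟩_{I₋}`, which is `≲ [w]_{A₂}^{1/2}`. -/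
theorem statement10 :
    ∃ C : ℝ, 0 < C ∧ ∀ (w : ℝ → ℝ), (∀ x, 0 < w x) →
      LocallyIntegrable w volume → LocallyIntegrable (fun x => (w x)⁻¹) volume →
      ∀ A : ℝ, 0 ≤ A → (∀ p : ℤ × ℤ, avg w p * avg (fun x => (w x)⁻¹) p ≤ A) →
        IsLeast
          {C' : ℝ | 0 ≤ C' ∧ ∀ f : ℝ → ℝ, MemLp f 2 volume →
            eLpNorm (fun x => ∑' p : ℤ × ℤ, avg (fun y => Real.sqrt (w y)) p *
                avg (fun y => (Real.sqrt (w y))⁻¹) (dLeft p) * hc f p * haarF (dLeft p) x)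
              2 volume ≤ ENNReal.ofReal C' * eLpNorm f 2 volume}
          (⨆ p : ℤ × ℤ, avg (fun y => Real.sqrt (w y)) p *
            avg (fun y => (Real.sqrt (w y))⁻¹) (dLeft p)) ∧
        (⨆ p : ℤ × ℤ, avg (fun y => Real.sqrt (w y)) p *
            avg (fun y => (Real.sqrt (w y))⁻¹) (dLeft p)) ≤ C * Real.sqrt A := by
  refine ⟨2, two_pos, fun w hw hw₁ hw₂ A _ hA => ?_⟩
  have hw₀ : ∀ x, 0 ≤ w x := fun x => (hw x).le
  have hbound : ∀ p, avg (fun y => √(w y)) p * avg (fun y => (√(w y))⁻¹) (dLeft p) ≤ 2 * √A :=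
    fun p => (avg_sqrt_mul_avg_inv_sqrt_dLeft_le hw₀ (hw₁.integrableOn_dyad p)
      (hw₂.integrableOn_dyad p)).trans (by gcongr; exact hA p)
  have hnonneg : ∀ p, 0 ≤ avg (fun y => √(w y)) p * avg (fun y => (√(w y))⁻¹) (dLeft p) :=
    fun p => mul_nonneg (avg_nonneg (fun x => Real.sqrt_nonneg _) p)
      (avg_nonneg (fun x => inv_nonneg.2 (Real.sqrt_nonneg _)) _)
  exact ⟨isLeast_haarShift_bound dLeft_injective hnonneg ⟨2 * √A, forall_mem_range.2 hbound⟩,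
    ciSup_le hbound⟩
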